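/- Under the feasibility condition max(a_min1, a_min2) ≤ a_max < 1 (with notation as in the feasibility theorem), the choice a_f = max(a_min1, a_min2) and a_n = 1 − a_f satisfies all three QoS constraints, and among all feasible power allocations it maximizes a_n. -/
import Mathlib

lemma aux_iff (r T I s a : ℝ) (hr : 0 < r) (hT : 0 < T) :
    a * T ≥ r * ((1 - a) * T + I + s) ↔ (T + I + s) / ((1 + 1 / r) * T) ≤ a := by
  have h1 : 0 < (1 + 1 / r) * T := by positivity
  have he : a * ((1 + 1 / r) * T) = (a * T * (r + 1)) / r := by
    field_simp
  rw [ge_iff_le, div_le_iff₀ h1, he, le_div_iff₀ hr]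
  constructor <;> intro h <;> nlinarith [h]

theorem stmt_4 (r_n r_f T_n T_f I_n I_f σ2 : ℝ)
    (hrn : 0 < r_n) (hrf : 0 < r_f) (hTn : 0 < T_n) (hTf : 0 < T_f)
    (hIn : 0 ≤ I_n) (hIf : 0 ≤ I_f) (hσ : 0 < σ2)
    (a_f : ℝ)
    (haf : a_f = max ((T_n + I_n + σ2) / ((1 + 1 / r_f) * T_n))
        ((T_f + I_f + σ2) / ((1 + 1 / r_f) * T_f)))
    (hfeas : a_f ≤ 1 - r_n * (I_n + σ2) / T_n ∧ 1 - r_n * (I_n + σ2) / T_n < 1) :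
    ((1 - a_f) * T_n ≥ r_n * (I_n + σ2) ∧
      a_f * T_n ≥ r_f * ((1 - a_f) * T_n + I_n + σ2) ∧
      a_f * T_f ≥ r_f * ((1 - a_f) * T_f + I_f + σ2)) ∧
    ∀ a_f' ∈ Set.Ioo (0 : ℝ) 1,
      ((1 - a_f') * T_n ≥ r_n * (I_n + σ2) ∧
        a_f' * T_n ≥ r_f * ((1 - a_f') * T_n + I_n + σ2) ∧
        a_f' * T_f ≥ r_f * ((1 - a_f') * T_f + I_f + σ2)) →
      1 - a_f' ≤ 1 - a_f := by
  obtain ⟨hf1, _⟩ := hfeas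
  have h1 : (1 - a_f) * T_n ≥ r_n * (I_n + σ2) := by
    have : r_n * (I_n + σ2) / T_n ≤ 1 - a_f := by linarith
    calc r_n * (I_n + σ2) = r_n * (I_n + σ2) / T_n * T_n := by
          field_simp
      _ ≤ (1 - a_f) * T_n := by
          exact mul_le_mul_of_nonneg_right this hTn.le
  refine ⟨⟨h1, ?_, ?_⟩, ?_⟩
  · rw [aux_iff _ _ _ _ _ hrf hTn, haf]; exact le_max_left _ _
  · rw [aux_iff _ _ _ _ _ hrf hTf, haf]; exact le_max_right _ _
  · rintro a' ⟨_, _⟩ ⟨_, h2', h3'⟩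
    rw [aux_iff _ _ _ _ _ hrf hTn] at h2'
    rw [aux_iff _ _ _ _ _ hrf hTf] at h3'
    have : a_f ≤ a' := by rw [haf]; exact max_le h2' h3'
    linarith
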